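/- arXiv:2407.05433 — 3 statements merged into one kernel-verified Lean document; each statement's English description precedes it below -/
import Mathlib

section
/- Let n, k, p be finite index types, R : Matrix (k ⊕ p) (k ⊕ p) ℝ symmetric with blocks R₁ : Matrix k k ℝ, R₂ : Matrix k p ℝ, R₃ : Matrix p p ℝ (so R = fromBlocks R₁ R₂ R₂ᵀ R₃), M = (M₁ | M₂) : Matrix n (k ⊕ p) ℝ with M₁ : Matrix n k ℝ and M₂ : Matrix n p ℝ, r : (k ⊕ p) → ℝ with blocks r₁ : k → ℝ, r₂ : p → ℝ, and let C : Matrix p n ℝ, G : Matrix p k ℝ, d : p → ℝ. For every x : n → ℝ and v : k → ℝ, setting w := -(C.mulVec x + G.mulVec v + d) and u := Sum.elim v w, we have (1/2) * (u ⬝ᵥ R.mulVec u) + x ⬝ᵥ M.mulVec u + r ⬝ᵥ u = (1/2) * (v ⬝ᵥ R′.mulVec v) + x ⬝ᵥ M′.mulVec v + (1/2) * (x ⬝ᵥ Q″.mulVec x) + q″ ⬝ᵥ x + r′ ⬝ᵥ v + κ, where R′ = R₁ - R₂*G - Gᵀ*R₂ᵀ + Gᵀ*R₃*G, M′ = M₁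 - M₂*G - Cᵀ*R₂ᵀ + Cᵀ*R₃*G, Q″ = Cᵀ*R₃*C - M₂*C - Cᵀ*M₂ᵀ, q″ = Cᵀ.mulVec (R₃.mulVec d - r₂) - M₂.mulVec d, r′ = r₁ - Gᵀ.mulVec r₂ + Gᵀ.mulVec (R₃.mulVec d) - R₂.mulVec d, and κ = (1/2) * (d ⬝ᵥ R₃.mulVec d) - r₂ ⬝ᵥ d. -/
open Matrix

lemma clqr_swap_mulVec_dotProduct {m l : Type*} [Fintype m] [Fintype l]
    (A : Matrix m l ℝ) (a : l → ℝ) (w : m → ℝ) :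
    A.mulVec a ⬝ᵥ w = a ⬝ᵥ Aᵀ.mulVec w := by
  rw [Matrix.dotProduct_mulVec, Matrix.vecMul_transpose, dotProduct_comm]

lemma clqr_dotProduct_mulVec_swap {m l : Type*} [Fintype m] [Fintype l]
    (A : Matrix m l ℝ) (a : m → ℝ) (b : l → ℝ) :
    a ⬝ᵥ A.mulVec b = b ⬝ᵥ Aᵀ.mulVec a := by
  rw [Matrix.dotProduct_mulVec, ← Matrix.mulVec_transpose, dotProduct_comm]

/-- Correctness of the control-elimination step (case `D = (G | I)`): eliminating
the controls `w` via `w = -(C x + G v + d)` yields a reduced stage cost in `(x, v)`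
with the stated coefficient matrices and an additive constant. -/
theorem clqr_partial_control_elim_cost_identity
    {n k p : Type*} [Fintype n] [Fintype k] [Fintype p]
    (R₁ : Matrix k k ℝ) (R₂ : Matrix k p ℝ) (R₃ : Matrix p p ℝ)
    (M₁ : Matrix n k ℝ) (M₂ : Matrix n p ℝ)
    (r₁ : k → ℝ) (r₂ : p → ℝ)
    (C : Matrix p n ℝ) (G : Matrix p k ℝ) (d : p → ℝ)
    (hR : (Matrix.fromBlocks R₁ R₂ R₂ᵀ R₃)ᵀ = Matrix.fromBlocks R₁ R₂ R₂ᵀ R₃)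
    (x : n → ℝ) (v : k → ℝ) :
    (1/2) * (Sum.elim v (-(C.mulVec x + G.mulVec v + d)) ⬝ᵥ
        (Matrix.fromBlocks R₁ R₂ R₂ᵀ R₃).mulVec
          (Sum.elim v (-(C.mulVec x + G.mulVec v + d))))
      + x ⬝ᵥ (Matrix.fromCols M₁ M₂).mulVec
          (Sum.elim v (-(C.mulVec x + G.mulVec v + d)))
      + Sum.elim r₁ r₂ ⬝ᵥ Sum.elim v (-(C.mulVec x + G.mulVec v + d)) =
    (1/2) * (v ⬝ᵥ (R₁ - R₂ * G - Gᵀ * R₂ᵀ + Gᵀ * R₃ * G).mulVec v)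
      + x ⬝ᵥ (M₁ - M₂ * G - Cᵀ * R₂ᵀ + Cᵀ * R₃ * G).mulVec v
      + (1/2) * (x ⬝ᵥ (Cᵀ * R₃ * C - M₂ * C - Cᵀ * M₂ᵀ).mulVec x)
      + (Cᵀ.mulVec (R₃.mulVec d - r₂) - M₂.mulVec d) ⬝ᵥ x
      + (r₁ - Gᵀ.mulVec r₂ + Gᵀ.mulVec (R₃.mulVec d) - R₂.mulVec d) ⬝ᵥ v
      + ((1/2) * (d ⬝ᵥ R₃.mulVec d) - r₂ ⬝ᵥ d) := by
  have hR3 : R₃ᵀ = R₃ := by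
    have := congrArg Matrix.toBlocks₂₂ hR
    simpa [Matrix.fromBlocks_transpose, Matrix.toBlocks_fromBlocks₂₂] using this
  have hR1 : R₁ᵀ = R₁ := by
    have := congrArg Matrix.toBlocks₁₁ hR
    simpa [Matrix.fromBlocks_transpose, Matrix.toBlocks_fromBlocks₁₁] using this
  simp only [Matrix.fromBlocks_mulVec, Matrix.fromCols_mulVec_sumElim,
    sumElim_dotProduct_sumElim, Matrix.mulVec_add, Matrix.mulVec_neg,
    Matrix.add_mulVec, Matrix.sub_mulVec, Matrix.mulVec_sub,
    dotProduct_add, add_dotProduct, dotProduct_neg,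
    neg_dotProduct, sub_dotProduct, dotProduct_sub,
    Matrix.mulVec_mulVec, Sum.elim_comp_inl, Sum.elim_comp_inr]
  simp only [clqr_swap_mulVec_dotProduct, Matrix.mulVec_mulVec, Matrix.transpose_mul,
    Matrix.transpose_transpose, hR3, hR1]
  have e1 : v ⬝ᵥ (R₂ * C).mulVec x = x ⬝ᵥ (Cᵀ * R₂ᵀ).mulVec v := by
    rw [clqr_dotProduct_mulVec_swap]; simp [Matrix.transpose_mul]
  have e2 : v ⬝ᵥ R₂.mulVec d = d ⬝ᵥ R₂ᵀ.mulVec v := by rw [clqr_dotProduct_mulVec_swap]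
  have e3 : v ⬝ᵥ (Gᵀ * (R₃ * C)).mulVec x = x ⬝ᵥ (Cᵀ * (R₃ * G)).mulVec v := by
    rw [clqr_dotProduct_mulVec_swap]; simp [Matrix.transpose_mul, hR3, Matrix.mul_assoc]
  have e4 : x ⬝ᵥ (Cᵀ * R₃).mulVec d = d ⬝ᵥ (R₃ * C).mulVec x := by
    rw [clqr_dotProduct_mulVec_swap]; simp [Matrix.transpose_mul, hR3]
  have e5 : v ⬝ᵥ (Gᵀ * R₃).mulVec d = d ⬝ᵥ (R₃ * G).mulVec v := by
    rw [clqr_dotProduct_mulVec_swap]; simp [Matrix.transpose_mul, hR3]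
  have e6 : x ⬝ᵥ (M₂ * C).mulVec x = x ⬝ᵥ (Cᵀ * M₂ᵀ).mulVec x := by
    rw [clqr_dotProduct_mulVec_swap]; simp [Matrix.transpose_mul]
  have e7 : x ⬝ᵥ M₂.mulVec d = d ⬝ᵥ M₂ᵀ.mulVec x := by rw [clqr_dotProduct_mulVec_swap]
  rw [e1, e2, e3, e4, e5, e7]
  rw [show x ⬝ᵥ (M₂ * C).mulVec x = x ⬝ᵥ (Cᵀ * M₂ᵀ).mulVec x from e6]
  simp only [← Matrix.mul_assoc]
  ring
end

section
/- Let k, p, k′, p′, m be finite index types. Let A : Matrix (k′ ⊕ p′) (k ⊕ p) ℝ have blocks A₁ : Matrix k′ k ℝ, A₂ : Matrix k′ p ℝ, A₃ : Matrix p′ k ℝ, A₄ : Matrix p′ p ℝ; let B : Matrix (k′ ⊕ p′) m ℝ have block rows B₁ : Matrix k′ m ℝ, B₂ : Matrix p′ m ℝ; let c : (k′ ⊕ p′) → ℝ have blocks c₁ : k′ → ℝ, c₂ : p′ → ℝ. Let F : Matrix p k ℝ, e : p → ℝ, F′ : Matrix p′ k′ ℝ, e′ : p′ → ℝ. For y :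 k → ℝ, y′ : k′ → ℝ, u : m → ℝ, define x := Sum.elim y (-(F.mulVec y) - e) and x′ := Sum.elim y′ (-(F′.mulVec y′) - e′). Then x′ = A.mulVec x + B.mulVec u + c holds if and only if both (i) y′ = (A₁ - A₂*F).mulVec y + B₁.mulVec u + (c₁ - A₂.mulVec e), and (ii) (A₃ - A₄*F + F′*(A₁ - A₂*F)).mulVec y + (B₂ + F′*B₁).mulVec u + (c₂ - A₄.mulVec e + F′.mulVec (c₁ - A₂.mulVec e) + e′) = 0. -/
/-!
The block dynamics splits into its top rows, which are the reduced dynamics for `y'`, and its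
bottom rows, which read `-F' y' - e' = …`; substituting the top rows for `y'` in the bottom rows
turns them into the mixed state-and-control constraint.
-/

open Matrix

theorem mulVec_add_mulVec_neg_mulVec_sub {R k p n : Type*} [Ring R] [Fintype k] [Fintype p]
    (A₁ : Matrix n k R) (A₂ : Matrix n p R) (F : Matrix p k R) (e : p → R) (y : k → R) :
    A₁ *ᵥ y + A₂ *ᵥ (-(F *ᵥ y) - e) = (A₁ - A₂ * F) *ᵥ y - A₂ *ᵥ e := by
  rw [sub_mulVec, ← mulVec_mulVec, mulVec_sub, mulVec_neg]
  abel

theorem neg_sub_eq_iff_add_add_eq_zero {G : Type*} [AddCommGroup G] (a b c : G) :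
    -a - b = c ↔ c + a + b = 0 := by
  rw [add_assoc, add_eq_zero_iff_eq_neg, neg_add, ← sub_eq_add_neg, eq_comm]

theorem clqr_state_elim_dynamics_equiv_general
    {k p k' p' m : Type*} [Fintype k] [Fintype p] [Fintype k'] [Fintype m]
    (A₁ : Matrix k' k ℝ) (A₂ : Matrix k' p ℝ) (A₃ : Matrix p' k ℝ) (A₄ : Matrix p' p ℝ)
    (B₁ : Matrix k' m ℝ) (B₂ : Matrix p' m ℝ) (c₁ : k' → ℝ) (c₂ : p' → ℝ)
    (F : Matrix p k ℝ) (e : p → ℝ) (F' : Matrix p' k' ℝ) (e' : p' → ℝ)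
    (y : k → ℝ) (y' : k' → ℝ) (u : m → ℝ) :
    Sum.elim y' (-(F'.mulVec y') - e') =
        (Matrix.fromBlocks A₁ A₂ A₃ A₄).mulVec (Sum.elim y (-(F.mulVec y) - e))
          + (Matrix.fromRows B₁ B₂).mulVec u + Sum.elim c₁ c₂ ↔
      (y' = (A₁ - A₂ * F).mulVec y + B₁.mulVec u + (c₁ - A₂.mulVec e)) ∧
      ((A₃ - A₄ * F + F' * (A₁ - A₂ * F)).mulVec y + (B₂ + F' * B₁).mulVec u
          + (c₂ - A₄.mulVec e + F'.mulVec (c₁ - A₂.mulVec e) + e') = 0) := by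
  simp only [fromBlocks_mulVec, fromRows_mulVec, Sum.elim_comp_inl, Sum.elim_comp_inr]
  rw [mulVec_add_mulVec_neg_mulVec_sub, mulVec_add_mulVec_neg_mulVec_sub, ← Sum.elim_add_add,
    ← Sum.elim_add_add, Sum.elim_eq_iff]
  have reduced_dynamics : (A₁ - A₂ * F) *ᵥ y - A₂ *ᵥ e + B₁ *ᵥ u + c₁
      = (A₁ - A₂ * F) *ᵥ y + B₁ *ᵥ u + (c₁ - A₂ *ᵥ e) := by abel
  rw [reduced_dynamics]
  refine and_congr_right fun hy' => ?_
  rw [hy', neg_sub_eq_iff_add_add_eq_zero]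
  simp only [add_mulVec, ← mulVec_mulVec, mulVec_add]
  abel_nf

/-- Correctness of the state-elimination step of the constrained LQR reduction:
after eliminating the constrained state components via `x₂ = -F x₁ - e` at
consecutive stages, the original dynamics constraint is equivalent to a reduced
dynamics equation for the kept state components together with a new mixed
state-and-control linear equality constraint. -/
theorem clqr_state_elim_dynamics_equiv
    {k p k' p' m : Type*} [Fintype k] [Fintype p] [Fintype k'] [Fintype p'] [Fintype m]
    (A₁ : Matrix k' k ℝ) (A₂ : Matrix k' p ℝ) (A₃ : Matrix p' k ℝ) (A₄ : Matrix p' p ℝ)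
    (B₁ : Matrix k' m ℝ) (B₂ : Matrix p' m ℝ) (c₁ : k' → ℝ) (c₂ : p' → ℝ)
    (F : Matrix p k ℝ) (e : p → ℝ) (F' : Matrix p' k' ℝ) (e' : p' → ℝ)
    (y : k → ℝ) (y' : k' → ℝ) (u : m → ℝ) :
    Sum.elim y' (-(F'.mulVec y') - e') =
        (Matrix.fromBlocks A₁ A₂ A₃ A₄).mulVec (Sum.elim y (-(F.mulVec y) - e))
          + (Matrix.fromRows B₁ B₂).mulVec u + Sum.elim c₁ c₂ ↔
      (y' = (A₁ - A₂ * F).mulVec y + B₁.mulVec u + (c₁ - A₂.mulVec e)) ∧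
      ((A₃ - A₄ * F + F' * (A₁ - A₂ * F)).mulVec y + (B₂ + F' * B₁).mulVec u
          + (c₂ - A₄.mulVec e + F'.mulVec (c₁ - A₂.mulVec e) + e') = 0) :=
  clqr_state_elim_dynamics_equiv_general A₁ A₂ A₃ A₄ B₁ B₂ c₁ c₂ F e F' e' y y' u
end

section
/- Let N : ℕ and let n : Fin (N+1) → ℕ and m : Fin N → ℕ be dimension functions. For each i : Fin N let Q i : Matrix (Fin (n i.castSucc)) (Fin (n i.castSucc)) ℝ, R i : Matrix (Fin (m i)) (Fin (m i)) ℝ, M i : Matrix (Fin (n i.castSucc)) (Fin (m i)) ℝ, q i : Fin (n i.castSucc) → ℝ, r i : Fin (m i) → ℝ, A i : Matrix (Fin (n i.succ)) (Fin (n i.castSucc)) ℝ, B i : Matrix (Fin (n i.succ)) (Fin (m i)) ℝ, c i : Fin (n i.succ) → ℝ, and let Q_N : Matrix (Fin (n (Fin.last N))) (Fin (n (Fin.last N))) ℝ, q_N : Fin (n (Fin.last N)) → ℝ, s₀ : Fin (n 0) → ℝ. Assume for each i that R i is positive definite and that the block matrix fromBlocks (Q i) (M i) (M i)ᵀ (R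 i) is positive semidefinite, and that Q_N is positive semidefinite. Define the feasible set 𝒮 of pairs (x, u) with x : (i : Fin (N+1)) → Fin (n i) → ℝ and u : (i : Fin N) → Fin (m i) → ℝ satisfying x 0 = s₀ and x i.succ = (A i).mulVec (x i.castSucc) + (B i).mulVec (u i) + c i for all i : Fin N, and the objective J(x,u) = ∑_{i} ((1/2)·(x i.castSucc ⬝ᵥ (Q i).mulVec (x i.castSucc)) + (1/2)·(u i ⬝ᵥ (R i).mulVec (u i)) + (x i.castSucc ⬝ᵥ (M i).mulVec (u i)) + q i ⬝ᵥ x i.castSucc + r i ⬝ᵥ u i) + (1/2)·(x (Fin.last N) ⬝ᵥ Q_N.mulVec (x (Fin.last N))) + q_N ⬝ᵥ x (Fin.last N). Then J attains a minimum on 𝒮: there exists (x*, u*) ∈ 𝒮 with J(x*,u*) ≤ J(x,u) for all (x,u) ∈ 𝒮. -/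
open Matrix

/-- The trajectory `(x, u)` is feasible: it satisfies the initial-state
constraint and the dynamics. -/
def LQRFeasible (N : ℕ) (n : Fin (N + 1) → ℕ) (m : Fin N → ℕ)
    (A : ∀ i : Fin N, Matrix (Fin (n i.succ)) (Fin (n i.castSucc)) ℝ)
    (B : ∀ i : Fin N, Matrix (Fin (n i.succ)) (Fin (m i)) ℝ)
    (c : ∀ i : Fin N, Fin (n i.succ) → ℝ)
    (s₀ : Fin (n 0) → ℝ)
    (x : ∀ i : Fin (N + 1), Fin (n i) → ℝ)
    (u : ∀ i : Fin N, Fin (m i) → ℝ) : Prop :=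
  x 0 = s₀ ∧
    ∀ i : Fin N,
      x i.succ = (A i).mulVec (x i.castSucc) + (B i).mulVec (u i) + c i

/-- The LQR objective function. -/
noncomputable def LQRCost (N : ℕ) (n : Fin (N + 1) → ℕ) (m : Fin N → ℕ)
    (Q : ∀ i : Fin N, Matrix (Fin (n i.castSucc)) (Fin (n i.castSucc)) ℝ)
    (R : ∀ i : Fin N, Matrix (Fin (m i)) (Fin (m i)) ℝ)
    (M : ∀ i : Fin N, Matrix (Fin (n i.castSucc)) (Fin (m i)) ℝ)
    (q : ∀ i : Fin N, Fin (n i.castSucc) → ℝ)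
    (r : ∀ i : Fin N, Fin (m i) → ℝ)
    (QN : Matrix (Fin (n (Fin.last N))) (Fin (n (Fin.last N))) ℝ)
    (qN : Fin (n (Fin.last N)) → ℝ)
    (x : ∀ i : Fin (N + 1), Fin (n i) → ℝ)
    (u : ∀ i : Fin N, Fin (m i) → ℝ) : ℝ :=
  (∑ i : Fin N,
      ((1 / 2) * (x i.castSucc ⬝ᵥ (Q i).mulVec (x i.castSucc))
        + (1 / 2) * (u i ⬝ᵥ (R i).mulVec (u i))
        + x i.castSucc ⬝ᵥ (M i).mulVec (u i)
        + q i ⬝ᵥ x i.castSucc + r i ⬝ᵥ u i))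
    + (1 / 2) * (x (Fin.last N) ⬝ᵥ QN.mulVec (x (Fin.last N)))
    + qN ⬝ᵥ x (Fin.last N)

/-! Eliminating the states through the dynamics turns the cost into a function `f` of the controls
alone, with `f (a • u) = f 0 + a * ℓ u + a ^ 2 * Φ u`, where `Φ u` is the purely quadratic cost of
the trajectory driven by `u` from the zero state. The block condition makes every stage cost
nonnegative, and positive definiteness of `R` makes `Φ` vanish only at `u = 0`: a zero state
forces a zero control, which keeps the state zero. Minimising `Φ` and `ℓ` over the unit sphere
gives `Φ u ≥ ε ‖u‖ ^ 2` and `ℓ u ≥ -K ‖u‖`, so the continuous function `f` is coercive on a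
finite-dimensional space and attains its minimum. -/

open Filter Metric

section Homogeneous

variable {E : Type*} [NormedAddCommGroup E] [NormedSpace ℝ E] [ProperSpace E]

theorem exists_ne_zero_forall_norm_pow_mul_le [Nontrivial E] {g : E → ℝ} (hg : Continuous g)
    {k : ℕ} (hg_smul : ∀ a : ℝ, 0 ≤ a → ∀ u, g (a • u) = a ^ k * g u) :
    ∃ w ≠ 0, ∀ u, ‖u‖ ^ k * g w ≤ g u := by
  obtain ⟨w, hw, hmin⟩ := (isCompact_sphere (0 : E) 1).exists_isMinOn
    (NormedSpace.sphere_nonempty.2 zero_le_one) hg.continuousOn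
  refine ⟨w, ne_zero_of_mem_unit_sphere ⟨w, hw⟩, fun u => ?_⟩
  obtain ⟨v, hv, hvu⟩ : ∃ v ∈ sphere (0 : E) 1, ‖u‖ • v = u := by
    rcases eq_or_ne u 0 with rfl | hu
    · exact ⟨w, hw, by simp⟩
    · exact ⟨‖u‖⁻¹ • u, by simp [norm_smul, hu], smul_inv_smul₀ (norm_ne_zero_iff.2 hu) u⟩
  calc ‖u‖ ^ k * g w ≤ ‖u‖ ^ k * g v := mul_le_mul_of_nonneg_left (hmin hv) (by positivity)
    _ = g u := by rw [← hg_smul _ (norm_nonneg u), hvu]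

theorem exists_forall_le_add_of_homogeneous {Φ ℓ : E → ℝ} (hΦ : Continuous Φ)
    (hΦ_smul : ∀ a : ℝ, 0 ≤ a → ∀ u, Φ (a • u) = a ^ 2 * Φ u) (hΦ_pos : ∀ u ≠ 0, 0 < Φ u)
    (hℓ : Continuous ℓ) (hℓ_smul : ∀ a : ℝ, 0 ≤ a → ∀ u, ℓ (a • u) = a * ℓ u) :
    ∃ u₀, ∀ u, Φ u₀ + ℓ u₀ ≤ Φ u + ℓ u := by
  rcases subsingleton_or_nontrivial E with hE | hE
  · exact ⟨0, fun u => by rw [Subsingleton.elim u 0]⟩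
  obtain ⟨w, hw, hΦ_ge⟩ := exists_ne_zero_forall_norm_pow_mul_le hΦ hΦ_smul
  obtain ⟨v, -, hℓ_le⟩ := exists_ne_zero_forall_norm_pow_mul_le hℓ (k := 1)
    (by simpa only [pow_one] using hℓ_smul)
  have hε : 0 < Φ w := hΦ_pos w hw
  have h₀ : Φ 0 + ℓ 0 = 0 := by simpa using congr($(hΦ_smul 0 le_rfl 0) + $(hℓ_smul 0 le_rfl 0))
  have hfar : ∀ᶠ u in cocompact E, Φ 0 + ℓ 0 ≤ Φ u + ℓ u := by
    filter_upwards [tendsto_norm_cocompact_atTop.eventually_ge_atTop (-ℓ v / Φ w)] with u hu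
    have hK : -ℓ v ≤ ‖u‖ * Φ w := (div_le_iff₀ hε).1 hu
    have hΦu := hΦ_ge u
    have hℓu := hℓ_le u
    rw [pow_one] at hℓu
    rw [h₀]
    linarith [mul_le_mul_of_nonneg_left hK (norm_nonneg u), sq ‖u‖, mul_assoc ‖u‖ ‖u‖ (Φ w)]
  exact (hΦ.add hℓ).exists_forall_le' 0 hfar

end Homogeneous

theorem Matrix.dotProduct_fromBlocks_mulVec_sumElim {k l α : Type*} [Fintype k] [Fintype l]
    [CommSemiring α] (Q : Matrix k k α) (M : Matrix k l α) (R : Matrix l l α) (x : k → α)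
    (v : l → α) :
    Sum.elim x v ⬝ᵥ fromBlocks Q M Mᵀ R *ᵥ Sum.elim x v =
      x ⬝ᵥ Q *ᵥ x + 2 * (x ⬝ᵥ M *ᵥ v) + v ⬝ᵥ R *ᵥ v := by
  simp only [fromBlocks_mulVec, sumElim_dotProduct_sumElim, Sum.elim_comp_inl,
    Sum.elim_comp_inr, dotProduct_add]
  rw [dotProduct_mulVec v, vecMul_transpose, dotProduct_comm _ x]
  ring

section LQR

variable {N : ℕ} {n : Fin (N + 1) → ℕ} {m : Fin N → ℕ}
  (Q : ∀ i : Fin N, Matrix (Fin (n i.castSucc)) (Fin (n i.castSucc)) ℝ)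
  (R : ∀ i : Fin N, Matrix (Fin (m i)) (Fin (m i)) ℝ)
  (M : ∀ i : Fin N, Matrix (Fin (n i.castSucc)) (Fin (m i)) ℝ)
  (q : ∀ i : Fin N, Fin (n i.castSucc) → ℝ) (r : ∀ i : Fin N, Fin (m i) → ℝ)
  (A : ∀ i : Fin N, Matrix (Fin (n i.succ)) (Fin (n i.castSucc)) ℝ)
  (B : ∀ i : Fin N, Matrix (Fin (n i.succ)) (Fin (m i)) ℝ)
  (c : ∀ i : Fin N, Fin (n i.succ) → ℝ)
  (QN : Matrix (Fin (n (Fin.last N))) (Fin (n (Fin.last N))) ℝ) (qN : Fin (n (Fin.last N)) → ℝ)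
  (s₀ : Fin (n 0) → ℝ)

def lqrTrajectory (u : ∀ i : Fin N, Fin (m i) → ℝ) : ∀ i : Fin (N + 1), Fin (n i) → ℝ :=
  Fin.induction s₀ fun i x => A i *ᵥ x + B i *ᵥ u i + c i

@[simp]
theorem lqrTrajectory_zero (u : ∀ i : Fin N, Fin (m i) → ℝ) :
    lqrTrajectory A B c s₀ u 0 = s₀ :=
  rfl

@[simp]
theorem lqrTrajectory_succ (u : ∀ i : Fin N, Fin (m i) → ℝ) (i : Fin N) :
    lqrTrajectory A B c s₀ u i.succ =
      A i *ᵥ lqrTrajectory A B c s₀ u i.castSucc + B i *ᵥ u i + c i :=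
  Fin.induction_succ _ _ i

theorem LQRFeasible_iff (x : ∀ i : Fin (N + 1), Fin (n i) → ℝ) (u : ∀ i : Fin N, Fin (m i) → ℝ) :
    LQRFeasible N n m A B c s₀ x u ↔ x = lqrTrajectory A B c s₀ u := by
  refine ⟨fun ⟨h₀, hstep⟩ => funext fun i => ?_,
    fun hx => hx ▸ ⟨rfl, lqrTrajectory_succ A B c s₀ u⟩⟩
  induction i using Fin.induction with
  | zero => exact h₀
  | succ i ih => rw [hstep, ih, lqrTrajectory_succ]

theorem lqrTrajectory_eq_add (u : ∀ i : Fin N, Fin (m i) → ℝ) :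
    lqrTrajectory A B c s₀ u = lqrTrajectory A B c s₀ 0 + lqrTrajectory A B 0 0 u := by
  funext i
  induction i using Fin.induction with
  | zero => simp
  | succ i ih =>
    simp only [lqrTrajectory_succ, Pi.add_apply] at ih ⊢
    rw [ih]
    simp only [mulVec_add, mulVec_zero, Pi.zero_apply]
    abel

theorem lqrTrajectory_smul (a : ℝ) (u : ∀ i : Fin N, Fin (m i) → ℝ) :
    lqrTrajectory A B 0 0 (a • u) = a • lqrTrajectory A B 0 0 u := by
  funext i
  induction i using Fin.induction with
  | zero => simp
  | succ i ih =>
    simp only [lqrTrajectory_succ, Pi.smul_apply] at ih ⊢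
    simp [ih, mulVec_smul]

theorem continuous_lqrTrajectory : Continuous (lqrTrajectory A B c s₀) := by
  refine continuous_pi fun i => ?_
  induction i using Fin.induction with
  | zero => exact continuous_const
  | succ i ih =>
    simp only [lqrTrajectory_succ]
    fun_prop

theorem continuous_LQRCost {α : Type*} [TopologicalSpace α]
    {x : α → ∀ i : Fin (N + 1), Fin (n i) → ℝ} {u : α → ∀ i : Fin N, Fin (m i) → ℝ}
    (hx : Continuous x) (hu : Continuous u) :
    Continuous fun a => LQRCost N n m Q R M q r QN qN (x a) (u a) := by
  unfold LQRCost
  fun_prop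

theorem LQRCost_add_smul (x z : ∀ i : Fin (N + 1), Fin (n i) → ℝ)
    (v u : ∀ i : Fin N, Fin (m i) → ℝ) (a : ℝ) :
    LQRCost N n m Q R M q r QN qN (x + a • z) (v + a • u) =
      LQRCost N n m Q R M q r QN qN x v
        + a * (LQRCost N n m Q R M q r QN qN (x + z) (v + u) - LQRCost N n m Q R M q r QN qN x v
          - LQRCost N n m Q R M 0 0 QN 0 z u)
        + a ^ 2 * LQRCost N n m Q R M 0 0 QN 0 z u := by
  unfold LQRCost
  simp only [Pi.add_apply, Pi.smul_apply, Pi.zero_apply, mulVec_add, mulVec_smul, add_dotProduct,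
    dotProduct_add, smul_dotProduct, dotProduct_smul, smul_eq_mul, zero_dotProduct,
    Finset.sum_add_distrib, ← Finset.mul_sum, add_zero]
  ring

theorem LQRCost_lqrTrajectory_pos (hR : ∀ i : Fin N, (R i).PosDef)
    (hQR : ∀ i : Fin N, (fromBlocks (Q i) (M i) (M i)ᵀ (R i)).PosSemidef) (hQN : QN.PosSemidef)
    {u : ∀ i : Fin N, Fin (m i) → ℝ} (hu : u ≠ 0) :
    0 < LQRCost N n m Q R M 0 0 QN 0 (lqrTrajectory A B 0 0 u) u := by
  set z := lqrTrajectory A B 0 0 u with hz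
  have hstage : ∀ i, 0 ≤ 1 / 2 * (z i.castSucc ⬝ᵥ Q i *ᵥ z i.castSucc)
      + 1 / 2 * (u i ⬝ᵥ R i *ᵥ u i) + z i.castSucc ⬝ᵥ M i *ᵥ u i := fun i => by
    have := (hQR i).dotProduct_mulVec_nonneg (Sum.elim (z i.castSucc) (u i))
    rw [star_trivial, dotProduct_fromBlocks_mulVec_sumElim] at this
    linarith
  have hterm : 0 ≤ 1 / 2 * (z (Fin.last N) ⬝ᵥ QN *ᵥ z (Fin.last N)) := by
    have := hQN.dotProduct_mulVec_nonneg (z (Fin.last N))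
    rw [star_trivial] at this
    positivity
  simp only [LQRCost, Pi.zero_apply, zero_dotProduct, add_zero]
  have hsum := Finset.sum_nonneg fun i (_ : i ∈ Finset.univ) => hstage i
  refine (add_nonneg hsum hterm).lt_of_ne fun h => hu ?_
  have hstage_zero := (Finset.sum_eq_zero_iff_of_nonneg fun i _ => hstage i).1
    ((add_eq_zero_iff_of_nonneg hsum hterm).1 h.symm).1
  have hu_of_z : ∀ i, z i.castSucc = 0 → u i = 0 := fun i hzi => by
    by_contra hui
    have hpos := (hR i).dotProduct_mulVec_pos hui
    have h0 := hstage_zero i (Finset.mem_univ i)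
    rw [star_trivial] at hpos
    simp only [hzi, zero_dotProduct, mul_zero, zero_add, add_zero] at h0
    linarith
  have hz_zero : ∀ i, z i = 0 := Fin.induction rfl fun i hi => by
    rw [hz, lqrTrajectory_succ, ← hz, hi, hu_of_z i hi]
    simp
  exact funext fun i => hu_of_z i (hz_zero _)

theorem exists_forall_LQRCost_lqrTrajectory_le (hR : ∀ i : Fin N, (R i).PosDef)
    (hQR : ∀ i : Fin N, (fromBlocks (Q i) (M i) (M i)ᵀ (R i)).PosSemidef) (hQN : QN.PosSemidef) :
    ∃ u₀ : ∀ i : Fin N, Fin (m i) → ℝ, ∀ u,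
      LQRCost N n m Q R M q r QN qN (lqrTrajectory A B c s₀ u₀) u₀ ≤
        LQRCost N n m Q R M q r QN qN (lqrTrajectory A B c s₀ u) u := by
  let f := fun u => LQRCost N n m Q R M q r QN qN (lqrTrajectory A B c s₀ u) u
  let Φ := fun u => LQRCost N n m Q R M 0 0 QN 0 (lqrTrajectory A B 0 0 u) u
  have hf : Continuous f :=
    continuous_LQRCost Q R M q r QN qN (continuous_lqrTrajectory A B c s₀) continuous_id
  have hΦ : Continuous Φ :=
    continuous_LQRCost Q R M 0 0 QN 0 (continuous_lqrTrajectory A B 0 0) continuous_id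
  have hΦ_smul : ∀ (a : ℝ) u, Φ (a • u) = a ^ 2 * Φ u := fun a u => by
    have := LQRCost_add_smul Q R M 0 0 QN 0 0 (lqrTrajectory A B 0 0 u) 0 u a
    have h₀ : LQRCost N n m Q R M 0 0 QN 0 0 0 = 0 := by simp [LQRCost]
    simp only [zero_add, ← lqrTrajectory_smul, h₀] at this
    simp only [Φ, this]
    ring
  have hf_smul : ∀ (a : ℝ) u, f (a • u) = f 0 + a * (f u - f 0 - Φ u) + a ^ 2 * Φ u := fun a u => by
    have := LQRCost_add_smul Q R M q r QN qN
      (lqrTrajectory A B c s₀ 0) (lqrTrajectory A B 0 0 u) 0 u a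
    simp only [zero_add, ← lqrTrajectory_smul, ← lqrTrajectory_eq_add] at this
    exact this
  obtain ⟨u₀, hu₀⟩ := exists_forall_le_add_of_homogeneous (ℓ := fun u => f u - f 0 - Φ u) hΦ
    (fun a _ u => hΦ_smul a u) (fun u hu => LQRCost_lqrTrajectory_pos Q R M A B QN hR hQR hQN hu)
    ((hf.sub continuous_const).sub hΦ) (fun a _ u => by simp only [hf_smul, hΦ_smul]; ring)
  exact ⟨u₀, fun u => by linarith [hu₀ u]⟩

end LQR

/-- Under the standard LQR regularity conditions (each `R i` positive definite and
each `fromBlocks (Q i) (M i) (M i)ᵀ (R i)` positive semidefinite, with positive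
semidefinite terminal cost), the unconstrained discrete-time LQR problem attains
a minimum over the feasible set determined by the dynamics and the initial state. -/
theorem lqr_attains_minimum (N : ℕ) (n : Fin (N + 1) → ℕ) (m : Fin N → ℕ)
    (Q : ∀ i : Fin N, Matrix (Fin (n i.castSucc)) (Fin (n i.castSucc)) ℝ)
    (R : ∀ i : Fin N, Matrix (Fin (m i)) (Fin (m i)) ℝ)
    (M : ∀ i : Fin N, Matrix (Fin (n i.castSucc)) (Fin (m i)) ℝ)
    (q : ∀ i : Fin N, Fin (n i.castSucc) → ℝ)
    (r : ∀ i : Fin N, Fin (m i) → ℝ)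
    (A : ∀ i : Fin N, Matrix (Fin (n i.succ)) (Fin (n i.castSucc)) ℝ)
    (B : ∀ i : Fin N, Matrix (Fin (n i.succ)) (Fin (m i)) ℝ)
    (c : ∀ i : Fin N, Fin (n i.succ) → ℝ)
    (QN : Matrix (Fin (n (Fin.last N))) (Fin (n (Fin.last N))) ℝ)
    (qN : Fin (n (Fin.last N)) → ℝ)
    (s₀ : Fin (n 0) → ℝ)
    (hR : ∀ i : Fin N, (R i).PosDef)
    (hQR : ∀ i : Fin N, (Matrix.fromBlocks (Q i) (M i) (M i)ᵀ (R i)).PosSemidef)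
    (hQN : QN.PosSemidef) :
    ∃ (x : ∀ i : Fin (N + 1), Fin (n i) → ℝ) (u : ∀ i : Fin N, Fin (m i) → ℝ),
      LQRFeasible N n m A B c s₀ x u ∧
        ∀ (x' : ∀ i : Fin (N + 1), Fin (n i) → ℝ) (u' : ∀ i : Fin N, Fin (m i) → ℝ),
          LQRFeasible N n m A B c s₀ x' u' →
            LQRCost N n m Q R M q r QN qN x u ≤ LQRCost N n m Q R M q r QN qN x' u' := by
  obtain ⟨u₀, hu₀⟩ :=
    exists_forall_LQRCost_lqrTrajectory_le Q R M q r A B c QN qN s₀ hR hQR hQN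
  refine ⟨_, u₀, (LQRFeasible_iff A B c s₀ _ u₀).2 rfl, fun x u hxu => ?_⟩
  rw [(LQRFeasible_iff A B c s₀ x u).1 hxu]
  exact hu₀ u
end
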